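/- arXiv:2308.00052 — 2 statements merged into one kernel-verified Lean document; each statement's English description precedes it below -/
import Mathlib

section
/- If contracts C = (A, G) and C' = (A', G') are both in normal form, then C' refines C if and only if A ≤ A' and G' ≤ G. -/
/-- for contracts in normal form, refinement coincides with
    componentwise refinement of assumptions and guarantees. -/
theorem normal_form_contract_refinement
    {S : Type*} (comp : S → S → S) (le : S → S → Prop)
    (le_refl : ∀ s, le s s)
    (le_trans : ∀ s t u, le s t → le t u → le s u)
    (le_comp : ∀ s s' t t', le s s' → le t t' → le (comp s t) (comp s' t'))
    -- relativized refinement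
    (relRef : S → S → S → Prop)
    (hrel : ∀ A I G, relRef A I G ↔ ∀ E', le E' A → le (comp I E') (comp G E'))
    -- the two contracts
    (A G A' G' : S)
    -- both contracts are in normal form
    (hnfC : ∀ I, relRef A I G ↔ le I G)
    (hnfC' : ∀ I, relRef A' I G' ↔ le I G') :
    -- C' = (A',G') refines C = (A,G) iff A ≤ A' and G' ≤ G
    (({E | le E A} ⊆ {E | le E A'}) ∧ ({I | relRef A' I G'} ⊆ {I | relRef A I G}))
      ↔ (le A A' ∧ le G' G) := by
  constructor
  · rintro ⟨henv, himpl⟩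
    refine ⟨henv (le_refl A), ?_⟩
    exact (hnfC G').mp (himpl ((hnfC' G').mpr (le_refl G')))
  · rintro ⟨hAA', hG'G⟩
    constructor
    · intro E hE
      exact le_trans E A A' hE hAA'
    · intro I hI
      exact (hnfC I).mpr (le_trans I G' G ((hnfC' I).mp hI) hG'G)
end

section
/- Sufficient condition for contract decomposition: if ⋀_{1≤i≤n} G_i ≤ G and for each i, A ∧ ⋀_{j≠i} G_j ≤ A_i, where all contracts are in normal form and the specification theory's conjunction is the greatest lower bound with respect to ≤, then the composition of the contracts C_1, …, C_n refines C = (A, G), in the sense that every tuple of implementations I_i ∈ ⟦C_i⟧_impl composed with any environment E ∈ ⟦C⟧_env satisfies: each I_i sees its assumption met, and the composed guarantees entail G. -/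
/-- sufficient condition for contract decomposition in the
    set-based model. -/
theorem contract_decomposition
    {B : Type*} {n : ℕ}
    (A G : Fin n → Set B) (A₀ G₀ : Set B)
    (h1 : (⋂ i, G i) ⊆ G₀)
    (h2 : ∀ i, (A₀ ∩ ⋂ j, ⋂ (_ : j ≠ i), G j) ⊆ A i) :
    ∀ (I : Fin n → Set B), (∀ i, I i ⊆ G i) →
      ∀ E : Set B, E ⊆ A₀ →
        ((E ∩ ⋂ i, I i) ⊆ G₀) ∧
        (∀ i, (E ∩ ⋂ j, ⋂ (_ : j ≠ i), I j) ⊆ A i) := by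
  intro I hI E hE
  constructor
  · intro x hx
    exact h1 (Set.mem_iInter.2 fun i => hI i (Set.mem_iInter.1 hx.2 i)) 
  · intro i x hx
    refine h2 i ⟨hE hx.1, ?_⟩
    refine Set.mem_iInter.2 fun j => Set.mem_iInter.2 fun hj => ?_
    exact hI j (Set.mem_iInter.1 (Set.mem_iInter.1 hx.2 j) hj)
end
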